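/- Inheritance is subtyping: for signature closures sc₁ and sc₂, sc₁ ⊴ sc₂ if and only if 𝕊[sc₁] ⊆ 𝕊[sc₂], where 𝕊[sc] = {(scs, fr, mr) ∈ O | scs ⊴ sc} ∪ {⊥}. -/

import Mathlib

open scoped Classical

inductive Obj (S L : Type) : Type where
  | bot : Obj S L
  | node (sc : S) (fr : List (L × Obj S L))
      (mr : List (L × List (List (Obj S L) × Obj S L))) : Obj S L

variable {S L : Type}

/-- `o` is bottom, or is a non-bottom object whose signature closure subsigns `s`. -/
def SubOrBot (sub : S → S → Prop) (o : Obj S L) (s : S) : Prop :=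
  o = .bot ∨ ∃ sc fr mr, o = .node sc fr mr ∧ sub sc s

section
variable (sub : S → S → Prop) (fsig : S → List (L × S))
  (msig : S → List (L × (List S × S)))

mutual
/-- Validity of an object: bottom is valid; a triple is valid iff its records'
shapes equal the declared field/method shapes of its signature closure, its field
values are valid and subsign the declared field signature closures, and its
methods send valid, subsigning argument sequences (prepended with the object's own
signature closure, for `this`) to valid results subsigning the declared return
signature closures. -/
def Valid : Obj S L → Prop
  | .bot => True
  | .node sc fr mr =>
      fr.map Prod.fst = (fsig sc).map Prod.fst ∧
      mr.map Prod.fst = (msig sc).map Prod.fst ∧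
      ValidFields (fsig sc) fr ∧
      ValidMeths sc (msig sc) mr

def ValidFields : List (L × S) → List (L × Obj S L) → Prop
  | _, [] => True
  | [], _ :: _ => False
  | d :: ds, p :: ps => (Valid p.2 ∧ SubOrBot sub p.2 d.2) ∧ ValidFields ds ps

def ValidMeths (sc : S) : List (L × (List S × S)) → List (L × List (List (Obj S L) × Obj S L)) → Prop
  | _, [] => True
  | [], _ :: _ => False
  | d :: ds, p :: ps => ValidGraph (sc :: d.2.1) d.2.2 p.2 ∧ ValidMeths sc ds ps

def ValidGraph (params : List S) (ret : S) : List (List (Obj S L) × Obj S L) → Prop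
  | [] => True
  | e :: t => (ArgsConform params e.1 → Valid e.2 ∧ SubOrBot sub e.2 ret) ∧
      ValidGraph params ret t

def ArgsConform : List S → List (Obj S L) → Prop
  | [], [] => True
  | s :: ss, o :: os => (Valid o ∧ SubOrBot sub o s) ∧ ArgsConform ss os
  | _, _ => False
end

end

section
variable (sub : S → S → Prop) (fsig : S → List (L × S))
  (msig : S → List (L × (List S × S)))

/-- The class type denoted by a signature closure `sc`: all valid objects whose
signature closure subsigns `sc`, together with bottom. -/
def ClassType (sc : S) : Set (Obj S L) :=
  {o | Valid sub fsig msig o ∧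
    (o = .bot ∨ ∃ sc' fr mr, o = .node sc' fr mr ∧ sub sc' sc)}

/-- The canonical instance of `sc`: all fields bound to `⊥` and all methods bound
to the bottom method (the empty graph). -/
def botInstance (sc : S) : Obj S L :=
  .node sc ((fsig sc).map fun p => (p.1, .bot))
    ((msig sc).map fun p => (p.1, ([] : List (List (Obj S L) × Obj S L))))

lemma validFields_map_bot (ds : List (L × S)) :
    ValidFields sub fsig msig ds (ds.map fun p => (p.1, Obj.bot)) := by
  induction ds with
  | nil => simp only [List.map_nil, ValidFields]
  | cons d ds ih => exact ⟨⟨by simp only [Valid], Or.inl rfl⟩, ih⟩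

lemma validMeths_map_nil (sc : S) (ds : List (L × (List S × S))) :
    ValidMeths sub fsig msig sc ds
      (ds.map fun p => (p.1, ([] : List (List (Obj S L) × Obj S L)))) := by
  induction ds with
  | nil => simp only [List.map_nil, ValidMeths]
  | cons d ds ih => exact ⟨by simp only [ValidGraph], ih⟩

lemma valid_botInstance (sc : S) : Valid sub fsig msig (botInstance (L := L) fsig msig sc) := by
  simp only [botInstance, Valid, List.map_map]
  exact ⟨rfl, rfl, validFields_map_bot sub fsig msig _, validMeths_map_nil sub fsig msig _ _⟩

lemma botInstance_mem_classType (hrefl : Reflexive sub) (sc : S) :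
    botInstance (L := L) fsig msig sc ∈ ClassType sub fsig msig sc :=
  ⟨valid_botInstance sub fsig msig sc, Or.inr ⟨sc, _, _, rfl, hrefl sc⟩⟩

lemma classType_mono (htrans : Transitive sub) {sc₁ sc₂ : S} (h : sub sc₁ sc₂) :
    ClassType (L := L) sub fsig msig sc₁ ⊆ ClassType sub fsig msig sc₂ := by
  rintro o ⟨hv, rfl | ⟨sc, fr, mr, rfl, hsc⟩⟩
  · exact ⟨hv, Or.inl rfl⟩
  · exact ⟨hv, Or.inr ⟨sc, fr, mr, rfl, htrans hsc h⟩⟩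

lemma sub_of_node_mem_classType {sc sc' : S} {fr : List (L × Obj S L)}
    {mr : List (L × List (List (Obj S L) × Obj S L))}
    (h : Obj.node sc fr mr ∈ ClassType sub fsig msig sc') : sub sc sc' := by
  obtain ⟨-, hbot | ⟨_, _, _, heq, hsub⟩⟩ := h
  · cases hbot
  · obtain ⟨rfl, -, -⟩ := Obj.node.inj heq
    exact hsub

/-- inheritance is subtyping: for signature closures `sc₁`, `sc₂`,
`sc₁ ⊴ sc₂` if and only if `𝕊[sc₁] ⊆ 𝕊[sc₂]`. -/
theorem inheritance_is_subtyping (hrefl : Reflexive sub) (htrans : Transitive sub)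
    (sc₁ sc₂ : S) :
    sub sc₁ sc₂ ↔
      ClassType (L := L) sub fsig msig sc₁ ⊆ ClassType (L := L) sub fsig msig sc₂ :=
  ⟨classType_mono sub fsig msig htrans, fun h =>
    sub_of_node_mem_classType sub fsig msig (h (botInstance_mem_classType sub fsig msig hrefl sc₁))⟩

end
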